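/- (GFlowNet classifier guidance, Proposition 2 claim 2.) Let p_F be a forward policy on a GFlowNet domain with induced state-visitation function p satisfying p(s) > 0 for all s, and let P(y | s) be a function on states and labels satisfying P(y | s) > 0 for all s and P(y | s) = Σ_{s' : (s,s')∈A} p_F(s' | s) P(y | s') for every non-terminal s. Fix a label y and define the classifier-guided policy p_F(s' | s, y) = p_F(s' | s) · P(y | s')/P(y | s). Then p_F(· | ·, y) is a valid forward policy, and its induced state-visitation function p_y satisfies p_y(s) = p(s) P(y | s)/P(y | s0) for every state s; in particular, at terminal states p_y(x) is proportional to p(x) P(y | x). -/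

import Mathlib

open Finset

/-- A state is terminal if it has no outgoing edges. -/
def IsTerminal {S : Type*} (A : S → S → Prop) (s : S) : Prop := ∀ s', ¬ A s s'

/-- A GFlowNet domain: a finite set of states with an edge relation `A` whose
transitive closure is irreflexive (a DAG), an initial state `s0` with no
incoming edges, and `s0` not terminal. -/
def IsGFlowNetDomain {S : Type*} [Fintype S] (A : S → S → Prop) (s0 : S) : Prop :=
  Irreflexive (Relation.TransGen A) ∧ (∀ s, ¬ A s s0) ∧ ¬ IsTerminal A s0

/-- A forward policy: nonnegative, supported on edges, and summing to one over
the successors of every non-terminal state. -/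
def IsForwardPolicy {S : Type*} [Fintype S] (A : S → S → Prop) [DecidableRel A]
    (pF : S → S → ℝ) : Prop :=
  (∀ s s', 0 ≤ pF s s') ∧ (∀ s s', ¬ A s s' → pF s s' = 0) ∧
    (∀ s, ¬ IsTerminal A s → ∑ s' ∈ univ.filter (fun s' => A s s'), pF s s' = 1)

/-- The state-visitation function induced by a forward policy: `p s0 = 1` and
`p s = ∑_{s* : (s*,s) ∈ A} p s* * pF s* s` for every `s ≠ s0`. -/
def IsVisitation {S : Type*} [Fintype S] (A : S → S → Prop) [DecidableRel A]
    (s0 : S) (pF : S → S → ℝ) (p : S → ℝ) : Prop :=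
  p s0 = 1 ∧
    ∀ s, s ≠ s0 → p s = ∑ sp ∈ univ.filter (fun sp => A sp s), p sp * pF sp s

/-! The guided policy sums to one at each non-terminal state by the consistency of `P(y | ·)`.
The candidate `s ↦ p s * P(y | s) / P(y | s0)` satisfies the visitation recursion of the guided
policy, because the factor `P(y | s*)` of each parent cancels against the denominator of
`pF(s | s*, y)`; and on a finite DAG that recursion has only one solution. -/

theorem wellFounded_of_irreflexive_transGen {S : Type*} [Finite S] {A : S → S → Prop}
    (hA : ∀ s, ¬ Relation.TransGen A s s) : WellFounded A :=
  haveI : IsTrans S (Relation.TransGen A) := ⟨fun _ _ _ => Relation.TransGen.trans⟩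
  haveI : Std.Irrefl (Relation.TransGen A) := ⟨hA⟩
  Subrelation.wf Relation.TransGen.single (Finite.wellFounded_of_trans_of_irrefl _)

section

variable {S : Type*} [Fintype S] {A : S → S → Prop} [DecidableRel A]

theorem IsVisitation.unique {s0 : S} {pF : S → S → ℝ} {p q : S → ℝ} (hA : WellFounded A)
    (hp : IsVisitation A s0 pF p) (hq : IsVisitation A s0 pF q) : p = q := by
  funext s
  induction s using hA.induction with
  | _ s ih =>
    by_cases hs : s = s0
    · rw [hs, hp.1, hq.1]
    · rw [hp.2 s hs, hq.2 s hs]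
      exact sum_congr rfl fun sp hsp => by rw [ih sp (mem_filter.mp hsp).2]

theorem IsForwardPolicy.reweight {pF : S → S → ℝ} (hpF : IsForwardPolicy A pF) {h : S → ℝ}
    (hpos : ∀ s, 0 < h s)
    (hrec : ∀ s, ¬ IsTerminal A s → h s = ∑ s' ∈ univ.filter (fun s' => A s s'), pF s s' * h s') :
    IsForwardPolicy A (fun s s' => pF s s' * h s' / h s) := by
  obtain ⟨hnonneg, hsupp, -⟩ := hpF
  refine ⟨fun s s' => div_nonneg (mul_nonneg (hnonneg s s') (hpos s').le) (hpos s).le,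
    fun s s' hss' => by simp [hsupp s s' hss'], fun s hs => ?_⟩
  rw [← sum_div, ← hrec s hs, div_self (hpos s).ne']

theorem IsVisitation.reweight {s0 : S} {pF : S → S → ℝ} {p : S → ℝ}
    (hp : IsVisitation A s0 pF p) {h : S → ℝ} (hne : ∀ s, h s ≠ 0) :
    IsVisitation A s0 (fun s s' => pF s s' * h s' / h s) (fun s => p s * h s / h s0) := by
  refine ⟨by simp only [hp.1, one_mul, div_self (hne s0)], fun s hs => ?_⟩
  have hterm : ∀ sp ∈ univ.filter (fun sp => A sp s),
      p sp * h sp / h s0 * (pF sp s * h s / h sp) = p sp * pF sp s * (h s / h s0) := by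
    intro sp _
    field_simp [hne sp, hne s0]
  rw [sum_congr rfl hterm, ← sum_mul, ← hp.2 s hs]
  exact mul_div_assoc _ _ _

end

theorem gflownet_classifier_guidance_general
    {S : Type*} [Fintype S]
    (A : S → S → Prop) [DecidableRel A] (s0 : S)
    (hdom : IsGFlowNetDomain A s0)
    (pF : S → S → ℝ) (hpF : IsForwardPolicy A pF)
    (p : S → ℝ) (hp : IsVisitation A s0 pF p)
    (Py : S → ℝ) (hPypos : ∀ s, 0 < Py s)
    (hPyrec : ∀ s, ¬ IsTerminal A s →
      Py s = ∑ s' ∈ univ.filter (fun s' => A s s'), pF s s' * Py s') :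
    IsForwardPolicy A (fun s s' => pF s s' * Py s' / Py s) ∧
    ∀ py : S → ℝ,
      IsVisitation A s0 (fun s s' => pF s s' * Py s' / Py s) py →
        ∀ s, py s = p s * Py s / Py s0 := by
  refine ⟨hpF.reweight hPypos hPyrec, fun py hpy => ?_⟩
  have hguided := hp.reweight fun s => (hPypos s).ne'
  exact congrFun (hpy.unique (wellFounded_of_irreflexive_transGen hdom.1) hguided)

/-- **GFlowNet classifier guidance, Proposition 2 claim 2.**
Let `pF` be a forward policy with induced, everywhere positive, state-visitation
function `p`, and let `Py` be a positive function of states satisfying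
`Py s = ∑_{s' : (s,s') ∈ A} pF s s' * Py s'` at every non-terminal state `s`
(the consistency of the classifier `P(y | ·)` for a fixed label `y`).  Then the
classifier-guided policy `pF(s' | s, y) = pF s s' * Py s' / Py s` is a valid
forward policy, and its induced state-visitation function `py` satisfies
`py s = p s * Py s / Py s0` for every state; in particular at terminal states
`py x` is proportional to `p x * Py x`. -/
theorem gflownet_classifier_guidance
    {S : Type*} [Fintype S]
    (A : S → S → Prop) [DecidableRel A] (s0 : S)
    (hdom : IsGFlowNetDomain A s0)
    (pF : S → S → ℝ) (hpF : IsForwardPolicy A pF)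
    (p : S → ℝ) (hp : IsVisitation A s0 pF p) (hppos : ∀ s, 0 < p s)
    (Py : S → ℝ) (hPypos : ∀ s, 0 < Py s)
    (hPyrec : ∀ s, ¬ IsTerminal A s →
      Py s = ∑ s' ∈ univ.filter (fun s' => A s s'), pF s s' * Py s') :
    IsForwardPolicy A (fun s s' => pF s s' * Py s' / Py s) ∧
    ∀ py : S → ℝ,
      IsVisitation A s0 (fun s s' => pF s s' * Py s' / Py s) py →
        ∀ s, py s = p s * Py s / Py s0 :=
  gflownet_classifier_guidance_general A s0 hdom pF hpF p hp Py hPypos hPyrec
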